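/- arXiv:1409.5330 — 7 statements merged into one kernel-verified Lean document; each statement's English description precedes it below -/
import Mathlib

section
/- Let D be a dictionary of unit-norm elements in a Hilbert space H with coherence M = sup_{g≠h, g,h∈D} |⟨g,h⟩|. Then for any distinct elements g_1,...,g_s ∈ D and any real coefficients a_1,...,a_s, one has (1 - M(s-1)) ∑_{i=1}^s a_i² ≤ ‖∑_{i=1}^s a_i g_i‖² ≤ (1 + M(s-1)) ∑_{i=1}^s a_i². -/
open scoped RealInnerProductSpace BigOperators

open Finset in
/-- For a unit-norm dictionary `D` with coherence `M`, distinct atoms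
`g 1, ..., g s` and coefficients `a i`, one has
`(1 - M(s-1)) ∑ aᵢ² ≤ ‖∑ aᵢ gᵢ‖² ≤ (1 + M(s-1)) ∑ aᵢ²`. -/
theorem osga_coherence_riesz
    {H : Type*} [NormedAddCommGroup H] [InnerProductSpace ℝ H]
    (D : Set H) (hnorm : ∀ g ∈ D, ‖g‖ = 1) (M : ℝ)
    (hM : ∀ g ∈ D, ∀ h ∈ D, g ≠ h → |⟪g, h⟫| ≤ M)
    (s : ℕ) (g : Fin s → H) (hgD : ∀ i, g i ∈ D) (hginj : Function.Injective g)
    (a : Fin s → ℝ) :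
    (1 - M * (s - 1)) * ∑ i, (a i) ^ 2 ≤ ‖∑ i, a i • g i‖ ^ 2 ∧
      ‖∑ i, a i • g i‖ ^ 2 ≤ (1 + M * (s - 1)) * ∑ i, (a i) ^ 2 := by
  classical
  have hgg : ∀ i, ⟪g i, g i⟫ = 1 := fun i => by
    rw [real_inner_self_eq_norm_sq, hnorm _ (hgD i)]; norm_num
  set T := ∑ i, (a i) ^ 2 with hT
  set E := ∑ i, ∑ j ∈ univ.erase i, a i * a j * ⟪g i, g j⟫ with hE
  have hS : ‖∑ i, a i • g i‖ ^ 2 = T + E := by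
    rw [← real_inner_self_eq_norm_sq, sum_inner]
    simp_rw [inner_sum, real_inner_smul_left, real_inner_smul_right]
    rw [hT, hE, ← Finset.sum_add_distrib]
    refine Finset.sum_congr rfl fun i _ => ?_
    rw [← Finset.add_sum_erase _ (fun j => a i * (a j * ⟪g i, g j⟫)) (Finset.mem_univ i),
      hgg]
    ring_nf
  have hEbound : |E| ≤ M * ((s : ℝ) - 1) * T := by
    rcases Nat.lt_or_ge s 2 with hs | hs
    · have hE0 : E = 0 := by
        rw [hE]
        refine Finset.sum_eq_zero fun i _ => Finset.sum_eq_zero fun j hj => absurd ?_ (Finset.ne_of_mem_erase hj)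
        exact Fin.ext (by omega)
      rw [hE0, abs_zero]
      rcases (by omega : s = 0 ∨ s = 1) with rfl | rfl
      · have : T = 0 := by rw [hT]; simp
        rw [this]; norm_num
      · norm_num
    · have i0 : Fin s := ⟨0, by omega⟩
      have i1 : Fin s := ⟨1, by omega⟩
      have h01 : (⟨0, by omega⟩ : Fin s) ≠ ⟨1, by omega⟩ := Fin.ne_of_val_ne (by norm_num)
      have hM0 : 0 ≤ M :=
        le_trans (abs_nonneg _)
          (hM (g ⟨0, by omega⟩) (hgD _) (g ⟨1, by omega⟩) (hgD _) (fun h => h01 (hginj h)))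
      have hT0 : 0 ≤ T := Finset.sum_nonneg fun i _ => sq_nonneg _
      calc |E| ≤ ∑ i, |∑ j ∈ univ.erase i, a i * a j * ⟪g i, g j⟫| :=
            Finset.abs_sum_le_sum_abs _ _
        _ ≤ ∑ i, ∑ j ∈ univ.erase i, |a i * a j * ⟪g i, g j⟫| :=
            Finset.sum_le_sum fun i _ => Finset.abs_sum_le_sum_abs _ _
        _ ≤ ∑ i, ∑ j ∈ univ.erase i, M * ((a i) ^ 2 + (a j) ^ 2) / 2 := by
            refine Finset.sum_le_sum fun i _ => Finset.sum_le_sum fun j hj => ?_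
            have hji : j ≠ i := Finset.ne_of_mem_erase hj
            have hgij : g i ≠ g j := fun h => hji (hginj h.symm)
            have h1 : |a i * a j * ⟪g i, g j⟫| ≤ |a i| * |a j| * M := by
              rw [abs_mul, abs_mul]
              exact mul_le_mul_of_nonneg_left
                (hM _ (hgD i) _ (hgD j) hgij)
                (mul_nonneg (abs_nonneg _) (abs_nonneg _))
            refine h1.trans ?_
            have h2 : |a i| * |a j| ≤ ((a i) ^ 2 + (a j) ^ 2) / 2 := by
              nlinarith [sq_nonneg (|a i| - |a j|), sq_abs (a i), sq_abs (a j)]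
            calc |a i| * |a j| * M ≤ ((a i) ^ 2 + (a j) ^ 2) / 2 * M :=
                  mul_le_mul_of_nonneg_right h2 hM0
              _ = M * ((a i) ^ 2 + (a j) ^ 2) / 2 := by ring
        _ = M * ((s : ℝ) - 1) * T := by
            have key : ∀ i : Fin s, ∑ j ∈ univ.erase i, M * ((a i) ^ 2 + (a j) ^ 2) / 2
                = M * (((s : ℝ) - 1) * (a i) ^ 2 + (T - (a i) ^ 2)) / 2 := by
              intro i
              have hcard : ((univ.erase i).card : ℝ) = (s : ℝ) - 1 := by
                rw [Finset.card_erase_of_mem (Finset.mem_univ i)]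
                simp [Nat.cast_sub (Nat.one_le_of_lt hs)]
              have hsum : ∑ j ∈ univ.erase i, (a j) ^ 2 = T - (a i) ^ 2 := by
                rw [hT, Finset.sum_erase_eq_sub (Finset.mem_univ i)]
              simp_rw [mul_add, add_div, Finset.sum_add_distrib]
              rw [Finset.sum_const, ← Finset.sum_div, ← Finset.mul_sum, hsum]
              rw [nsmul_eq_mul, hcard]
              ring
            have hsT : ∑ i : Fin s, (a i) ^ 2 = T := hT.symm
            have expand : ∀ i : Fin s, M * (((s : ℝ) - 1) * (a i) ^ 2 + (T - (a i) ^ 2)) / 2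
                = (M * ((s : ℝ) - 2) / 2) * (a i) ^ 2 + M * T / 2 := fun i => by ring
            rw [Finset.sum_congr rfl fun i _ => (key i).trans (expand i),
              Finset.sum_add_distrib, ← Finset.mul_sum, hsT, Finset.sum_const,
              Finset.card_univ, Fintype.card_fin, nsmul_eq_mul]
            ring
  have habs := abs_le.mp hEbound
  constructor
  · rw [hS]; nlinarith [habs.1]
  · rw [hS]; nlinarith [habs.2]
end

section
/- Let D be a dictionary of unit-norm elements in a Hilbert space H with coherence M, with M(s-1) < 1. Let g_1,...,g_s ∈ D be distinct and let G(s) = span{g_1,...,g_s}. Then for every f ∈ H, (1/(1+M(s-1))) ∑_{i=1}^s ⟨f,g_i⟩² ≤ ‖P_{G(s)} f‖² ≤ (1/(1-M(s-1))) ∑_{i=1}^s ⟨f,g_i⟩², where P_{G(s)} is the orthogonal projection onto G(s). -/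
open scoped RealInnerProductSpace BigOperators

noncomputable instance spanRangeFin.finiteDimensional
    {H : Type*} [NormedAddCommGroup H] [InnerProductSpace ℝ H]
    {s : ℕ} (g : Fin s → H) :
    FiniteDimensional ℝ (Submodule.span ℝ (Set.range g)) :=
  FiniteDimensional.span_of_finite ℝ (Set.finite_range g)

/-! Coherence bounds the off-diagonal part of the Gram matrix of `g` (Gershgorin, together with
`(∑ |cᵢ|)² ≤ s ∑ cᵢ²`), so `(1 - M(s-1)) ∑ cᵢ² ≤ ‖∑ cᵢ gᵢ‖² ≤ (1 + M(s-1)) ∑ cᵢ²`.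
Since `⟪P f, gᵢ⟫ = ⟪f, gᵢ⟫`, it remains to compare `‖x‖²` with `∑ ⟪x, gᵢ⟫²` for `x = P f`.
The upper Riesz bound controls `∑ ⟪x, gᵢ⟫² = ⟪x, ∑ ⟪x, gᵢ⟫ gᵢ⟫` through Cauchy–Schwarz in `H`;
the lower one, applied to `x = ∑ cᵢ gᵢ ∈ span g`, controls `‖x‖² = ∑ cᵢ ⟪x, gᵢ⟫` through
Cauchy–Schwarz in `ℝˢ`. -/

open Finset

section
variable {H : Type*} [NormedAddCommGroup H] [InnerProductSpace ℝ H] {ι : Type*} [Fintype ι]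

lemma norm_sq_sum_smul_sub_sum_sq [DecidableEq ι] {g : ι → H} (hg : ∀ i, ‖g i‖ = 1)
    (c : ι → ℝ) :
    ‖∑ i, c i • g i‖ ^ 2 - ∑ i, c i ^ 2 =
      ∑ i, ∑ j ∈ univ.erase i, c i * c j * ⟪g i, g j⟫ := by
  rw [← real_inner_self_eq_norm_sq, sum_inner, ← sum_sub_distrib]
  refine sum_congr rfl fun i _ => ?_
  rw [inner_sum, ← add_sum_erase _ _ (mem_univ i), real_inner_smul_left,
    real_inner_smul_right, real_inner_self_eq_norm_sq, hg i, one_pow, mul_one, ← sq,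
    add_sub_cancel_left]
  exact sum_congr rfl fun j _ => by rw [real_inner_smul_left, real_inner_smul_right]; ring

lemma sum_sum_erase_abs_mul_le [DecidableEq ι] (c : ι → ℝ) :
    ∑ i, ∑ j ∈ univ.erase i, |c i| * |c j| ≤ (Fintype.card ι - 1) * ∑ i, c i ^ 2 := by
  have hsq : ∑ i, ∑ j ∈ univ.erase i, |c i| * |c j| = (∑ i, |c i|) ^ 2 - ∑ i, c i ^ 2 := by
    rw [sq, sum_mul_sum, ← sum_sub_distrib]
    refine sum_congr rfl fun i _ => ?_
    rw [← add_sum_erase _ _ (mem_univ i), abs_mul_abs_self, sq]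
    ring
  have hcs : (∑ i, |c i|) ^ 2 ≤ Fintype.card ι * ∑ i, c i ^ 2 := by
    simpa only [sq_abs, card_univ] using
      sq_sum_le_card_mul_sum_sq (s := univ) (f := fun i => |c i|)
  linarith

lemma abs_norm_sq_sum_smul_sub_sum_sq_le {g : ι → H} (hg : ∀ i, ‖g i‖ = 1) {M : ℝ}
    (hM : Pairwise fun i j => |⟪g i, g j⟫| ≤ M) (c : ι → ℝ) :
    |‖∑ i, c i • g i‖ ^ 2 - ∑ i, c i ^ 2| ≤ M * ((Fintype.card ι - 1) * ∑ i, c i ^ 2) := by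
  classical
  rw [norm_sq_sum_smul_sub_sum_sq hg]
  -- with at most one vector `M` may be negative, but then there is no off-diagonal part
  rcases le_or_gt (Fintype.card ι) 1 with hι | hι
  · have hoff : ∑ i, ∑ j ∈ univ.erase i, c i * c j * ⟪g i, g j⟫ = 0 :=
      sum_eq_zero fun i _ => sum_eq_zero fun j hj =>
        absurd (Fintype.card_le_one_iff.1 hι j i) (ne_of_mem_erase hj)
    have hcard : (Fintype.card ι - 1 : ℝ) * ∑ i, c i ^ 2 = 0 := by
      rcases Nat.le_one_iff_eq_zero_or_eq_one.1 hι with h | h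
      · simp [Fintype.card_eq_zero_iff.1 h]
      · simp [h]
    rw [hoff, hcard, abs_zero, mul_zero]
  · obtain ⟨i, j, hij⟩ := Fintype.exists_pair_of_one_lt_card hι
    have hM0 : 0 ≤ M := (abs_nonneg _).trans (hM hij)
    calc |∑ i, ∑ j ∈ univ.erase i, c i * c j * ⟪g i, g j⟫|
        ≤ ∑ i, ∑ j ∈ univ.erase i, M * (|c i| * |c j|) := by
          refine (abs_sum_le_sum_abs _ _).trans (sum_le_sum fun i _ => ?_)
          refine (abs_sum_le_sum_abs _ _).trans (sum_le_sum fun j hj => ?_)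
          rw [abs_mul, abs_mul, mul_comm]
          exact mul_le_mul_of_nonneg_right (hM (ne_of_mem_erase hj).symm) (by positivity)
      _ = M * ∑ i, ∑ j ∈ univ.erase i, |c i| * |c j| := by simp only [mul_sum]
      _ ≤ M * ((Fintype.card ι - 1) * ∑ i, c i ^ 2) :=
          mul_le_mul_of_nonneg_left (sum_sum_erase_abs_mul_le c) hM0

lemma sum_inner_sq_le_of_norm_sq_sum_smul_le {g : ι → H} {B : ℝ} (hB₀ : 0 ≤ B)
    (hB : ∀ c : ι → ℝ, ‖∑ i, c i • g i‖ ^ 2 ≤ B * ∑ i, c i ^ 2) (x : H) :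
    ∑ i, ⟪x, g i⟫ ^ 2 ≤ B * ‖x‖ ^ 2 := by
  set S := ∑ i, ⟪x, g i⟫ ^ 2
  set y := ∑ i, ⟪x, g i⟫ • g i
  have hxy : ⟪x, y⟫ = S := by
    simp only [y, S, inner_sum, real_inner_smul_right, sq]
  have hS₀ : 0 ≤ S := sum_nonneg fun i _ => sq_nonneg _
  have hS : S * S ≤ S * (B * ‖x‖ ^ 2) :=
    calc S * S ≤ (‖x‖ * ‖y‖) ^ 2 := by
          rw [← sq]; exact pow_le_pow_left₀ hS₀ (hxy ▸ real_inner_le_norm x y) 2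
      _ = ‖x‖ ^ 2 * ‖y‖ ^ 2 := by ring
      _ ≤ ‖x‖ ^ 2 * (B * S) := by gcongr; exact hB _
      _ = S * (B * ‖x‖ ^ 2) := by ring
  rcases hS₀.eq_or_lt with h | h
  · rw [← h]; positivity
  · exact le_of_mul_le_mul_left hS h

lemma mul_norm_sq_le_sum_inner_sq_of_le_norm_sq_sum_smul {g : ι → H} {α : ℝ}
    (hα : ∀ c : ι → ℝ, α * ∑ i, c i ^ 2 ≤ ‖∑ i, c i • g i‖ ^ 2) {x : H}
    (hx : x ∈ Submodule.span ℝ (Set.range g)) :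
    α * ‖x‖ ^ 2 ≤ ∑ i, ⟪x, g i⟫ ^ 2 := by
  obtain ⟨c, hc⟩ := (Submodule.mem_span_range_iff_exists_fun ℝ).1 hx
  have hS₀ : 0 ≤ ∑ i, ⟪x, g i⟫ ^ 2 := sum_nonneg fun i _ => sq_nonneg _
  rcases le_or_gt α 0 with hα₀ | hα₀
  · exact (mul_nonpos_of_nonpos_of_nonneg hα₀ (sq_nonneg _)).trans hS₀
  have hx : ‖x‖ ^ 2 = ∑ i, c i * ⟪x, g i⟫ := by
    rw [← real_inner_self_eq_norm_sq]
    nth_rewrite 1 [← hc]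
    rw [sum_inner]
    exact sum_congr rfl fun i _ => by rw [real_inner_smul_left, real_inner_comm]
  have hcs := sum_mul_sq_le_sq_mul_sq univ c fun i => ⟪x, g i⟫
  rw [← hx] at hcs
  have hlow := hα c
  rw [hc] at hlow
  rcases (sq_nonneg ‖x‖).eq_or_lt with h | h
  · rw [← h, mul_zero]; exact hS₀
  refine le_of_mul_le_mul_left ?_ h
  calc ‖x‖ ^ 2 * (α * ‖x‖ ^ 2) = α * (‖x‖ ^ 2) ^ 2 := by ring
    _ ≤ α * ((∑ i, c i ^ 2) * ∑ i, ⟪x, g i⟫ ^ 2) := by gcongr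
    _ = (α * ∑ i, c i ^ 2) * ∑ i, ⟪x, g i⟫ ^ 2 := by ring
    _ ≤ ‖x‖ ^ 2 * ∑ i, ⟪x, g i⟫ ^ 2 := by gcongr
end

theorem osga_projection_bounds_general
    {H : Type*} [NormedAddCommGroup H] [InnerProductSpace ℝ H]
    (D : Set H) (hnorm : ∀ g ∈ D, ‖g‖ = 1) (M : ℝ)
    (hM : ∀ g ∈ D, ∀ h ∈ D, g ≠ h → |⟪g, h⟫| ≤ M)
    (s : ℕ) (g : Fin s → H) (hgD : ∀ i, g i ∈ D) (hginj : Function.Injective g)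
    (hMs : M * (s - 1) < 1) (f : H) :
    (1 / (1 + M * (s - 1))) * ∑ i, ⟪f, g i⟫ ^ 2 ≤
        ‖(Submodule.orthogonalProjection (Submodule.span ℝ (Set.range g)) f : H)‖ ^ 2 ∧
      ‖(Submodule.orthogonalProjection (Submodule.span ℝ (Set.range g)) f : H)‖ ^ 2 ≤
        (1 / (1 - M * (s - 1))) * ∑ i, ⟪f, g i⟫ ^ 2 := by
  set K := Submodule.span ℝ (Set.range g)
  set p : H := (K.orthogonalProjectionOnto f : H)
  have hgram (c : Fin s → ℝ) := abs_le.1 <| by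
    simpa only [Fintype.card_fin, ← mul_assoc] using abs_norm_sq_sum_smul_sub_sum_sq_le
      (fun i => hnorm _ (hgD i)) (fun i j hij => hM _ (hgD i) _ (hgD j) (hginj.ne hij)) c
  have hproj (i : Fin s) : ⟪p, g i⟫ = ⟪f, g i⟫ :=
    K.inner_orthogonalProjectionOnto_eq_of_mem_right
      ⟨g i, Submodule.subset_span (Set.mem_range_self i)⟩ f
  simp only [← hproj]
  constructor
  · rcases le_or_gt (1 + M * (s - 1)) 0 with hA | hA
    · exact (mul_nonpos_of_nonpos_of_nonneg (one_div_nonpos.2 hA)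
        (sum_nonneg fun i _ => sq_nonneg _)).trans (sq_nonneg _)
    rw [one_div_mul_eq_div, div_le_iff₀' hA]
    exact sum_inner_sq_le_of_norm_sq_sum_smul_le hA.le (fun c => by linarith [hgram c]) p
  · rw [one_div_mul_eq_div, le_div_iff₀' (by linarith)]
    exact mul_norm_sq_le_sum_inner_sq_of_le_norm_sq_sum_smul (fun c => by linarith [hgram c])
      (K.orthogonalProjectionOnto f).2

/-- projection norm bounds for incoherent dictionaries. -/
theorem osga_projection_bounds
    {H : Type*} [NormedAddCommGroup H] [InnerProductSpace ℝ H] [CompleteSpace H]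
    (D : Set H) (hnorm : ∀ g ∈ D, ‖g‖ = 1) (M : ℝ)
    (hM : ∀ g ∈ D, ∀ h ∈ D, g ≠ h → |⟪g, h⟫| ≤ M)
    (s : ℕ) (g : Fin s → H) (hgD : ∀ i, g i ∈ D) (hginj : Function.Injective g)
    (hMs : M * (s - 1) < 1) (f : H) :
    (1 / (1 + M * (s - 1))) * ∑ i, ⟪f, g i⟫ ^ 2 ≤
        ‖(Submodule.orthogonalProjection (Submodule.span ℝ (Set.range g)) f : H)‖ ^ 2 ∧
      ‖(Submodule.orthogonalProjection (Submodule.span ℝ (Set.range g)) f : H)‖ ^ 2 ≤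
        (1 / (1 - M * (s - 1))) * ∑ i, ⟪f, g i⟫ ^ 2 :=
  osga_projection_bounds_general D hnorm M hM s g hgD hginj hMs f
end

section
/- Let ‖P_{G(s)} f‖ denote the norm of the orthogonal projection of f onto the span G(s) of distinct unit-norm dictionary elements g_1,...,g_s with pairwise inner products bounded in absolute value by M, where M(s-1) < 1. Then ‖P_{G(s)} f‖ = max over ψ ∈ G(s) with ‖ψ‖ ≤ 1 of |⟨f, ψ⟩|, and in particular ‖P_{G(s)} f‖² ≥ (1+M(s-1))^{-1} ∑_{i=1}^s ⟨f, g_i⟩², obtained by testing against ψ = ∑_i ⟨f,g_i⟩ g_i / ((1+M(s-1))^{1/2} (∑_i ⟨f,g_i⟩²)^{1/2}). -/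
open scoped RealInnerProductSpace BigOperators

/-!
Since `f - P f` is orthogonal to `K = span {gᵢ}`, `⟪f, ψ⟫ = ⟪P f, ψ⟫` for `ψ ∈ K`; Cauchy–Schwarz
bounds this by `‖P f‖` on the unit ball of `K`, with equality at `ψ = P f / ‖P f‖`.
For the lower bound test against `ψ = ∑ cᵢ gᵢ` with `cᵢ = ⟪f, gᵢ⟫`, so that `⟪f, ψ⟫ = S := ∑ cᵢ²`.
Expanding `‖ψ‖²` and bounding each off-diagonal term `cᵢ cⱼ ⟪gᵢ, gⱼ⟫` by `M (cᵢ² + cⱼ²) / 2`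
gives `‖ψ‖² ≤ (1 + M (s - 1)) S`, hence `S² ≤ ‖P f‖² (1 + M (s - 1)) S`.
-/

section

variable {H : Type*} [NormedAddCommGroup H] [InnerProductSpace ℝ H]

namespace Submodule

variable (K : Submodule ℝ H) [K.HasOrthogonalProjection]

theorem abs_inner_le_norm_orthogonalProjectionOnto_mul_norm (f : H) {ψ : H} (hψ : ψ ∈ K) :
    |⟪f, ψ⟫| ≤ ‖(K.orthogonalProjectionOnto f : H)‖ * ‖ψ‖ := by
  rw [← inner_orthogonalProjectionOnto_eq_of_mem_right (⟨ψ, hψ⟩ : K) f]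
  exact abs_real_inner_le_norm _ _

theorem isGreatest_abs_inner_orthogonalProjectionOnto (f : H) :
    IsGreatest {x : ℝ | ∃ ψ ∈ K, ‖ψ‖ ≤ 1 ∧ x = |⟪f, ψ⟫|} ‖(K.orthogonalProjectionOnto f : H)‖ := by
  set p : H := (K.orthogonalProjectionOnto f : H)
  have hp : p ∈ K := (K.orthogonalProjectionOnto f).2
  have hfp : ⟪f, p⟫ = ‖p‖ ^ 2 := by
    rw [← inner_orthogonalProjectionOnto_eq_of_mem_right ⟨p, hp⟩ f, coe_inner,
      real_inner_self_eq_norm_sq]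
  refine ⟨⟨‖p‖⁻¹ • p, K.smul_mem _ hp, ?_, ?_⟩, ?_⟩
  · rw [norm_smul, norm_inv, norm_norm]
    exact inv_mul_le_one_of_le₀ le_rfl (norm_nonneg _)
  · rw [real_inner_smul_right, hfp, abs_of_nonneg (by positivity)]
    by_cases hp0 : ‖p‖ = 0
    · simp [hp0]
    · field_simp
  · rintro x ⟨ψ, hψ, hψ1, rfl⟩
    calc |⟪f, ψ⟫| ≤ ‖p‖ * ‖ψ‖ := K.abs_inner_le_norm_orthogonalProjectionOnto_mul_norm f hψ
      _ ≤ ‖p‖ := mul_le_of_le_one_right (norm_nonneg _) hψ1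

end Submodule

section GramBound

variable {ι : Type*} {g : ι → H} {M : ℝ}

theorem mul_mul_inner_le_of_abs_inner_le [DecidableEq ι] (hnorm : ∀ i, ‖g i‖ ≤ 1)
    (hM : ∀ i j, i ≠ j → |⟪g i, g j⟫| ≤ M) (c : ι → ℝ) (i j : ι) :
    c i * c j * ⟪g i, g j⟫ ≤
      M * (c i ^ 2 + c j ^ 2) / 2 + (1 - M) * if i = j then c i ^ 2 else 0 := by
  by_cases hij : i = j
  · subst hij
    have : ‖g i‖ ^ 2 ≤ 1 := pow_le_one₀ (norm_nonneg _) (hnorm i)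
    rw [real_inner_self_eq_norm_sq, if_pos rfl]
    nlinarith [sq_nonneg (c i)]
  · rw [if_neg hij]
    have hM0 : 0 ≤ M := (abs_nonneg _).trans (hM i j hij)
    calc c i * c j * ⟪g i, g j⟫ ≤ |c i| * |c j| * |⟪g i, g j⟫| := by
          rw [← abs_mul, ← abs_mul]; exact le_abs_self _
      _ ≤ |c i| * |c j| * M := by gcongr; exact hM i j hij
      _ ≤ M * (c i ^ 2 + c j ^ 2) / 2 := by
          nlinarith [sq_nonneg (|c i| - |c j|), sq_abs (c i), sq_abs (c j)]
      _ = _ := by ring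

theorem norm_sum_smul_sq_le_of_abs_inner_le [Fintype ι] (hnorm : ∀ i, ‖g i‖ ≤ 1)
    (hM : ∀ i j, i ≠ j → |⟪g i, g j⟫| ≤ M) (c : ι → ℝ) :
    ‖∑ i, c i • g i‖ ^ 2 ≤ (1 + M * (Fintype.card ι - 1)) * ∑ i, c i ^ 2 := by
  classical
  have hexpand : ‖∑ i, c i • g i‖ ^ 2 = ∑ i, ∑ j, c i * c j * ⟪g i, g j⟫ := by
    rw [← real_inner_self_eq_norm_sq, sum_inner]
    refine Finset.sum_congr rfl fun i _ => ?_
    rw [real_inner_smul_left, inner_sum, Finset.mul_sum]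
    refine Finset.sum_congr rfl fun j _ => ?_
    rw [real_inner_smul_right]
    ring
  rw [hexpand]
  calc ∑ i, ∑ j, c i * c j * ⟪g i, g j⟫
      ≤ ∑ i, ∑ j, (M * (c i ^ 2 + c j ^ 2) / 2 + (1 - M) * if i = j then c i ^ 2 else 0) := by
        gcongr with i _ j _
        exact mul_mul_inner_le_of_abs_inner_le hnorm hM c i j
    _ = _ := by
        simp only [mul_add, mul_ite, mul_zero, Finset.sum_add_distrib, ← Finset.sum_div,
          Finset.sum_const, Finset.card_univ, nsmul_eq_mul, ← Finset.mul_sum, Finset.sum_ite_eq,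
          Finset.mem_univ, ↓reduceIte, add_self_div_two]
        ring

theorem inv_mul_sum_sq_inner_le_norm_sq_orthogonalProjectionOnto [Fintype ι]
    [(Submodule.span ℝ (Set.range g)).HasOrthogonalProjection]
    (hnorm : ∀ i, ‖g i‖ ≤ 1) (hM : ∀ i j, i ≠ j → |⟪g i, g j⟫| ≤ M) (f : H) :
    (1 + M * (Fintype.card ι - 1))⁻¹ * ∑ i, ⟪f, g i⟫ ^ 2 ≤
      ‖((Submodule.span ℝ (Set.range g)).orthogonalProjectionOnto f : H)‖ ^ 2 := by
  set K := Submodule.span ℝ (Set.range g)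
  set p : H := (K.orthogonalProjectionOnto f : H)
  set D : ℝ := 1 + M * (Fintype.card ι - 1)
  set S : ℝ := ∑ i, ⟪f, g i⟫ ^ 2
  set ψ : H := ∑ i, ⟪f, g i⟫ • g i
  have hψK : ψ ∈ K := K.sum_mem fun i _ => K.smul_mem _ (Submodule.subset_span ⟨i, rfl⟩)
  have hfψ : ⟪f, ψ⟫ = S := by simp only [ψ, S, inner_sum, real_inner_smul_right, sq]
  have hψ : ‖ψ‖ ^ 2 ≤ D * S := norm_sum_smul_sq_le_of_abs_inner_le hnorm hM _
  have hS : 0 ≤ S := Finset.sum_nonneg fun i _ => sq_nonneg _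
  have hSD : S ^ 2 ≤ ‖p‖ ^ 2 * (D * S) := by
    calc S ^ 2 = |⟪f, ψ⟫| ^ 2 := by rw [sq_abs, hfψ]
      _ ≤ (‖p‖ * ‖ψ‖) ^ 2 := by
          gcongr; exact K.abs_inner_le_norm_orthogonalProjectionOnto_mul_norm f hψK
      _ ≤ ‖p‖ ^ 2 * (D * S) := by rw [mul_pow]; gcongr
  rcases hS.eq_or_lt with hS0 | hSpos
  · rw [← hS0, mul_zero]; positivity
  -- `S ≤ ‖p‖² D` with `S > 0` forces `D > 0`.
  have hSle : S ≤ ‖p‖ ^ 2 * D := by nlinarith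
  have hD : 0 < D := pos_of_mul_pos_right (hSpos.trans_le hSle) (by positivity)
  rwa [inv_mul_le_iff₀ hD, mul_comm]

end GramBound

end

theorem projection_norm_as_max_and_lower_bound_general
    {H : Type*} [NormedAddCommGroup H] [InnerProductSpace ℝ H]
    (M : ℝ) (s : ℕ) (g : Fin s → H)
    (hnorm : ∀ i, ‖g i‖ = 1)
    (hM : ∀ i j, i ≠ j → |⟪g i, g j⟫| ≤ M)
    (f : H) :
    IsGreatest
        {x : ℝ | ∃ ψ ∈ Submodule.span ℝ (Set.range g), ‖ψ‖ ≤ 1 ∧ x = |⟪f, ψ⟫|}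
        ‖(Submodule.orthogonalProjection (Submodule.span ℝ (Set.range g)) f : H)‖ ∧
      (1 + M * (s - 1))⁻¹ * ∑ i, ⟪f, g i⟫ ^ 2 ≤
        ‖(Submodule.orthogonalProjection (Submodule.span ℝ (Set.range g)) f : H)‖ ^ 2 :=
  ⟨Submodule.isGreatest_abs_inner_orthogonalProjectionOnto _ f, by
    simpa only [Fintype.card_fin] using inv_mul_sum_sq_inner_le_norm_sq_orthogonalProjectionOnto
      (fun i => (hnorm i).le) hM f⟩

/-- `‖P_{G(s)} f‖` is the maximum of `|⟪f, ψ⟫|` over `ψ` in the unit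
ball of `G(s) = span{g₁,…,g_s}`, and in particular
`‖P_{G(s)} f‖² ≥ (1 + M(s-1))⁻¹ ∑ ⟪f, gᵢ⟫²`. -/
theorem projection_norm_as_max_and_lower_bound
    {H : Type*} [NormedAddCommGroup H] [InnerProductSpace ℝ H] [CompleteSpace H]
    (M : ℝ) (s : ℕ) (g : Fin s → H)
    (hnorm : ∀ i, ‖g i‖ = 1) (hginj : Function.Injective g)
    (hM : ∀ i j, i ≠ j → |⟪g i, g j⟫| ≤ M)
    (hMs : M * (s - 1) < 1) (f : H) :
    IsGreatest
        {x : ℝ | ∃ ψ ∈ Submodule.span ℝ (Set.range g), ‖ψ‖ ≤ 1 ∧ x = |⟪f, ψ⟫|}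
        ‖(Submodule.orthogonalProjection (Submodule.span ℝ (Set.range g)) f : H)‖ ∧
      (1 + M * (s - 1))⁻¹ * ∑ i, ⟪f, g i⟫ ^ 2 ≤
        ‖(Submodule.orthogonalProjection (Submodule.span ℝ (Set.range g)) f : H)‖ ^ 2 :=
  projection_norm_as_max_and_lower_bound_general M s g hnorm hM f
end

section
/- Let (c_j)_{j≥1} be a sequence of reals with |c_{v+1}| ≥ |c_{v+2}| ≥ ..., ∑_{j=v+1}^∞ |c_j| ≤ B, and |c_{v+1}| ≤ 2B/s for some integer s ≥ 1 and B > 0. Partition the indices beyond v into consecutive blocks J_l = [(l-1)s+v+1, ls+v] of length s. Then ∑_{l=1}^∞ (∑_{j∈J_l} c_j²)^{1/2} ≤ 3B s^{-1/2}. -/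
/-- block estimate for the tail coefficients.  If `|c_{v+1}| ≥ |c_{v+2}| ≥ …`,
`∑_{j>v} |c_j| ≤ B` and `|c_{v+1}| ≤ 2B/s`, then summing over consecutive blocks
`J_l = [(l-1)s+v+1, ls+v]` of length `s`,
`∑_l (∑_{j∈J_l} c_j²)^{1/2} ≤ 3 B s^{-1/2}`. -/
theorem block_coefficient_estimate
    (s v : ℕ) (hs : 1 ≤ s) (B : ℝ) (hB : 0 < B) (c : ℕ → ℝ)
    (hmono : ∀ j, v + 1 ≤ j → |c (j + 1)| ≤ |c j|)
    (hsummable : Summable fun j : ℕ => |c (v + 1 + j)|)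
    (hsum : (∑' j : ℕ, |c (v + 1 + j)|) ≤ B)
    (hfirst : |c (v + 1)| ≤ 2 * B / s) :
    (∑' l : ℕ, Real.sqrt (∑ i ∈ Finset.range s, (c (l * s + v + 1 + i)) ^ 2)) ≤
      3 * B / Real.sqrt s := by
  have hs0 : 0 < (s : ℝ) := by exact_mod_cast hs
  have hsq : 0 < Real.sqrt s := Real.sqrt_pos.2 hs0
  set f : ℕ → ℝ := fun j => |c (v + 1 + j)| with hfdef
  have hf_nonneg : ∀ j, 0 ≤ f j := fun j => abs_nonneg _
  have hf_anti : Antitone f := by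
    apply antitone_nat_of_succ_le
    intro j
    have h := hmono (v + 1 + j) (by omega)
    have e : v + 1 + (j + 1) = v + 1 + j + 1 := by omega
    simpa [hfdef, e] using h
  set S : ℕ → ℝ := fun l => ∑ i ∈ Finset.range s, f (l * s + i) with hSdef
  have hS_nonneg : ∀ l, 0 ≤ S l :=
    fun l => Finset.sum_nonneg fun i _ => hf_nonneg _
  -- partial sums of blocks of f are bounded by B
  have hblocks : ∀ N : ℕ, ∑ l ∈ Finset.range N, S l = ∑ j ∈ Finset.range (N * s), f j := by
    intro N
    induction N with
    | zero => simp
    | succ N ih =>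
        rw [Finset.sum_range_succ, ih, Nat.succ_mul, Finset.sum_range_add]
  have hSB : ∀ N : ℕ, ∑ l ∈ Finset.range N, S l ≤ B := by
    intro N
    rw [hblocks]
    exact le_trans (Summable.sum_le_tsum _ (fun i _ => hf_nonneg i) hsummable) hsum
  -- the quantity inside sqrt
  have hQeq : ∀ l : ℕ, (∑ i ∈ Finset.range s, (c (l * s + v + 1 + i)) ^ 2)
      = ∑ i ∈ Finset.range s, (f (l * s + i)) ^ 2 := by
    intro l
    refine Finset.sum_congr rfl fun i _ => ?_
    have e : v + 1 + (l * s + i) = l * s + v + 1 + i := by omega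
    simp [hfdef, e, sq_abs]
  -- bound sum of squares in block l by first term times S l
  have hQle : ∀ l : ℕ, (∑ i ∈ Finset.range s, (f (l * s + i)) ^ 2) ≤ f (l * s) * S l := by
    intro l
    rw [hSdef]
    simp only
    rw [Finset.mul_sum]
    refine Finset.sum_le_sum fun i _ => ?_
    have h1 : f (l * s + i) ≤ f (l * s) := hf_anti (by omega)
    have h2 := hf_nonneg (l * s + i)
    nlinarith
  -- first term of block k+1 is at most S k / s
  have hm : ∀ k : ℕ, f ((k + 1) * s) ≤ S k / s := by
    intro k
    rw [le_div_iff₀ hs0]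
    have h : (Finset.range s).card • f ((k + 1) * s) ≤ S k := by
      refine Finset.card_nsmul_le_sum _ _ _ fun i hi => ?_
      refine hf_anti ?_
      have := Finset.mem_range.1 hi
      nlinarith [Nat.succ_mul k s]
    simpa [Finset.card_range, nsmul_eq_mul, mul_comm] using h
  -- per-block sqrt bounds
  have hsqrt0 : Real.sqrt (∑ i ∈ Finset.range s, (f (0 * s + i)) ^ 2) ≤ 2 * B / Real.sqrt s := by
    rw [Real.sqrt_le_iff]
    constructor
    · positivity
    · have h1 : (∑ i ∈ Finset.range s, (f (0 * s + i)) ^ 2) ≤ f 0 * S 0 := by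
        simpa using hQle 0
      have h2 : f 0 ≤ 2 * B / s := by simpa [hfdef] using hfirst
      have h3 : S 0 ≤ B := by simpa using hSB 1
      have h4 : (2 * B / Real.sqrt s) ^ 2 = 4 * B ^ 2 / s := by
        rw [div_pow, Real.sq_sqrt hs0.le]; ring
      rw [h4]
      have h5 : f 0 * S 0 ≤ (2 * B / s) * B :=
        mul_le_mul h2 h3 (hS_nonneg 0) (by positivity)
      refine le_trans h1 (le_trans h5 ?_)
      rw [div_mul_eq_mul_div, div_le_div_iff₀ hs0 hs0]
      nlinarith
  have hsqrtk : ∀ k : ℕ, Real.sqrt (∑ i ∈ Finset.range s, (f ((k + 1) * s + i)) ^ 2)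
      ≤ (S k + S (k + 1)) / (2 * Real.sqrt s) := by
    intro k
    have h1 : (∑ i ∈ Finset.range s, (f ((k + 1) * s + i)) ^ 2) ≤ (S k / s) * S (k + 1) :=
      le_trans (hQle (k + 1)) (mul_le_mul_of_nonneg_right (hm k) (hS_nonneg _))
    refine le_trans (Real.sqrt_le_sqrt h1) ?_
    have e : S k / s * S (k + 1) = (S k * S (k + 1)) / s := by ring
    rw [e, Real.sqrt_div (by positivity) _]
    rw [Real.sqrt_mul (hS_nonneg k)]
    rw [div_le_div_iff₀ hsq (by positivity)]
    have h3 := Real.sq_sqrt (hS_nonneg k)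
    have h4 := Real.sq_sqrt (hS_nonneg (k + 1))
    have h5 := Real.sqrt_nonneg (S k)
    have h6 := Real.sqrt_nonneg (S (k + 1))
    have h7 : Real.sqrt (S k) * Real.sqrt (S (k + 1)) * 2 ≤ S k + S (k + 1) := by
      nlinarith [sq_nonneg (Real.sqrt (S k) - Real.sqrt (S (k + 1)))]
    calc Real.sqrt (S k) * Real.sqrt (S (k + 1)) * (2 * Real.sqrt s)
        = (Real.sqrt (S k) * Real.sqrt (S (k + 1)) * 2) * Real.sqrt s := by ring
      _ ≤ (S k + S (k + 1)) * Real.sqrt s :=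
          mul_le_mul_of_nonneg_right h7 hsq.le
  -- assemble
  refine tsum_le_of_sum_le' (by positivity) fun F => ?_
  obtain ⟨N, hN⟩ := Finset.exists_nat_subset_range F
  have step1 : ∑ l ∈ F, Real.sqrt (∑ i ∈ Finset.range s, (c (l * s + v + 1 + i)) ^ 2)
      ≤ ∑ l ∈ Finset.range N, Real.sqrt (∑ i ∈ Finset.range s, (f (l * s + i)) ^ 2) := by
    have := Finset.sum_le_sum_of_subset_of_nonneg hN
      (fun i _ _ => Real.sqrt_nonneg (∑ i2 ∈ Finset.range s, (c (i * s + v + 1 + i2)) ^ 2))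
    refine le_trans this (le_of_eq (Finset.sum_congr rfl fun l _ => ?_))
    rw [hQeq l]
  refine le_trans step1 ?_
  rcases Nat.eq_zero_or_pos N with rfl | hN0
  · simp; positivity
  · obtain ⟨M, rfl⟩ : ∃ M, N = M + 1 := ⟨N - 1, by omega⟩
    rw [Finset.sum_range_succ']
    have tail : ∑ k ∈ Finset.range M,
        Real.sqrt (∑ i ∈ Finset.range s, (f ((k + 1) * s + i)) ^ 2) ≤ B / Real.sqrt s := by
      have hb : ∀ k ∈ Finset.range M,
          Real.sqrt (∑ i ∈ Finset.range s, (f ((k + 1) * s + i)) ^ 2)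
            ≤ (S k + S (k + 1)) / (2 * Real.sqrt s) := by
        intro k _
        exact hsqrtk k
      refine le_trans (Finset.sum_le_sum hb) ?_
      rw [← Finset.sum_div, Finset.sum_add_distrib]
      have hA : ∑ k ∈ Finset.range M, S k ≤ B := hSB _
      have hC : ∑ k ∈ Finset.range M, S (k + 1) ≤ B := by
        have h8 := Finset.sum_range_succ' S M
        have h9 := hSB (M + 1)
        have h10 := hS_nonneg 0
        linarith [h8 ▸ h9]
      rw [div_le_div_iff₀ (by positivity) hsq]
      have : (∑ k ∈ Finset.range M, S k) + ∑ k ∈ Finset.range M, S (k + 1)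
          ≤ 2 * B := by linarith
      calc ((∑ k ∈ Finset.range M, S k) + ∑ k ∈ Finset.range M, S (k + 1))
            * Real.sqrt s ≤ 2 * B * Real.sqrt s :=
          mul_le_mul_of_nonneg_right this hsq.le
        _ = B * (2 * Real.sqrt s) := by ring
    have h11 := hsqrt0
    have goal2 : 2 * B / Real.sqrt s + B / Real.sqrt s = 3 * B / Real.sqrt s := by
      field_simp; ring
    linarith
end

section
/- Let f = ∑_{k=1}^∞ c_k g_k where g_k are unit-norm dictionary elements with pairwise coherence at most M and ∑_k |c_k| ≤ B with |c_1| ≥ |c_2| ≥ .... If j is an index with |c_j| ≥ 2B/s where s ≤ (2M)^{-1} + 1, then |⟨f, g_j⟩| ≥ (2B/s)(1+M) − MB, while for any dictionary element g distinct from g_1,...,g_s one has |⟨f, g⟩| < B(M + 1/s). Consequently |⟨f, g_j⟩| ≥ |⟨f, g⟩| for all such g. -/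
open scoped RealInnerProductSpace

/-- if `f = ∑ₖ cₖ gₖ` with unit-norm atoms of mutual coherence at most `M`,
nonincreasing coefficients with `∑|cₖ| = B`, and `s ≤ (2M)⁻¹ + 1`, then for any index `j`
with `|c_j| ≥ 2B/s` one has `|⟪f, g_j⟫| ≥ (2B/s)(1+M) − MB`, while for any dictionary
element `g'` distinct from the first `s` atoms, `|⟪f, g'⟫| < B(M + 1/s)`; consequently
`|⟪f, g_j⟫| ≥ |⟪f, g'⟫|`. -/
theorem osga_first_step_selection
    {H : Type*} [NormedAddCommGroup H] [InnerProductSpace ℝ H]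
    (D : Set H) (hDnorm : ∀ g ∈ D, ‖g‖ = 1) (M : ℝ) (hM : 0 < M)
    (hcoh : ∀ g ∈ D, ∀ h ∈ D, g ≠ h → |⟪g, h⟫| ≤ M)
    (s : ℕ) (hs : 1 ≤ s) (hsM : (s : ℝ) ≤ (2 * M)⁻¹ + 1)
    (g : ℕ → H) (hgD : ∀ k, g k ∈ D) (hginj : Function.Injective g)
    (c : ℕ → ℝ) (f : H) (hf : HasSum (fun k => c k • g k) f)
    (hsummable : Summable fun k => |c k|)
    (B : ℝ) (hB : (∑' k, |c k|) = B) (hBpos : 0 < B)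
    (hmono : ∀ k, |c (k + 1)| ≤ |c k|)
    (j : ℕ) (hj : 2 * B / s ≤ |c j|)
    (g' : H) (hg'D : g' ∈ D) (hg' : ∀ k, k < s → g' ≠ g k) :
    (2 * B / s) * (1 + M) - M * B ≤ |⟪f, g j⟫| ∧
      |⟪f, g'⟫| < B * (M + 1 / s) ∧
      |⟪f, g'⟫| ≤ |⟪f, g j⟫| := by
  have hsR : (1:ℝ) ≤ (s:ℝ) := by exact_mod_cast hs
  have hsRpos : (0:ℝ) < (s:ℝ) := by linarith
  have hnorm : ∀ k, ‖g k‖ = 1 := fun k => hDnorm _ (hgD k)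
  have hgg : ∀ k, ⟪g k, g k⟫ = 1 := fun k => by
    rw [real_inner_self_eq_norm_sq, hnorm]; norm_num
  have hanti : Antitone fun k => |c k| := antitone_nat_of_succ_le hmono
  have hexp : ∀ h : H, HasSum (fun k => c k * ⟪g k, h⟫) ⟪f, h⟫ := fun h => by
    have := (innerSL ℝ h).hasSum hf
    simpa [real_inner_comm, real_inner_smul_right, mul_comm] using this
  have hckB : ∀ k, |c k| ≤ B := fun k =>
    hB ▸ Summable.le_tsum hsummable k fun _ _ => abs_nonneg _
  have htail : ∀ k0, (∑' k, if k = k0 then 0 else |c k|) = B - |c k0| := fun k0 => by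
    have := Summable.tsum_eq_add_tsum_ite hsummable k0
    rw [hB] at this
    linarith
  have hsumtail : ∀ k0, Summable fun k => if k = k0 then 0 else |c k| := fun k0 =>
    hsummable.of_nonneg_of_le
      (fun k => by positivity)
      (fun k => by by_cases hk : k = k0 <;> simp [hk])
  -- key splitting bound
  have split : ∀ (h : H), h ∈ D → ∀ (k0 : ℕ), (∀ k, k ≠ k0 → h ≠ g k) →
      |⟪f, h⟫ - c k0 * ⟪g k0, h⟫| ≤ M * (B - |c k0|) := by
    intro h hh k0 hne
    have hsum := hexp h
    have heq := Summable.tsum_eq_add_tsum_ite hsum.summable k0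
    rw [hsum.tsum_eq] at heq
    have hMbound : ∀ k, k ≠ k0 → |⟪g k, h⟫| ≤ M := fun k hk =>
      hcoh (g k) (hgD k) h hh (fun heq' => (hne k hk) heq'.symm)
    have hptwise : ∀ k, |if k = k0 then 0 else c k * ⟪g k, h⟫|
        ≤ M * (if k = k0 then 0 else |c k|) := by
      intro k
      by_cases hk : k = k0
      · simp [hk]
      · simp only [if_neg hk]
        rw [abs_mul]
        calc |c k| * |⟪g k, h⟫| ≤ |c k| * M :=
              mul_le_mul_of_nonneg_left (hMbound k hk) (abs_nonneg _)
          _ = M * |c k| := mul_comm _ _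
    have habs_summable : Summable fun k => |if k = k0 then 0 else c k * ⟪g k, h⟫| :=
      ((hsumtail k0).mul_left M).of_nonneg_of_le (fun k => abs_nonneg _) hptwise
    have hite_summable : Summable fun k => if k = k0 then 0 else c k * ⟪g k, h⟫ :=
      habs_summable.of_abs
    have h1 : |⟪f, h⟫ - c k0 * ⟪g k0, h⟫| = |∑' k, if k = k0 then 0 else c k * ⟪g k, h⟫| := by
      rw [heq]; ring_nf
    rw [h1]
    calc |∑' k, if k = k0 then 0 else c k * ⟪g k, h⟫|
        ≤ ∑' k, |if k = k0 then 0 else c k * ⟪g k, h⟫| := by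
          have h2 : Summable fun k => ‖if k = k0 then 0 else c k * ⟪g k, h⟫‖ := by
            simpa [Real.norm_eq_abs] using habs_summable
          simpa [Real.norm_eq_abs] using norm_tsum_le_tsum_norm h2
      _ ≤ ∑' k, M * (if k = k0 then 0 else |c k|) :=
          Summable.tsum_le_tsum hptwise habs_summable ((hsumtail k0).mul_left M)
      _ = M * (B - |c k0|) := by rw [tsum_mul_left, htail k0]
  -- Part 1
  have part1 : (2 * B / s) * (1 + M) - M * B ≤ |⟪f, g j⟫| := by
    have hsp := split (g j) (hgD j) j (fun k hk heq' => hk (hginj heq'.symm))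
    rw [hgg j, mul_one] at hsp
    have h2 := abs_sub_abs_le_abs_sub (c j) ⟪f, g j⟫
    rw [abs_sub_comm] at h2
    have hjB := hckB j
    nlinarith [mul_nonneg (sub_nonneg.2 hj) (by linarith : (0:ℝ) ≤ 1 + M)]
  -- Part 2
  have part2 : |⟪f, g'⟫| < B * (M + 1 / s) := by
    have hid : B * (M + 1 / (s:ℝ)) = M * B + B / s := by
      field_simp
    by_cases hcase : ∀ k, g' ≠ g k
    · -- direct bound M*B
      have hsum := hexp g'
      have hptwise : ∀ k, |c k * ⟪g k, g'⟫| ≤ M * |c k| := by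
        intro k
        rw [abs_mul]
        have := hcoh (g k) (hgD k) g' hg'D (fun heq' => (hcase k) heq'.symm)
        calc |c k| * |⟪g k, g'⟫| ≤ |c k| * M :=
              mul_le_mul_of_nonneg_left this (abs_nonneg _)
          _ = M * |c k| := mul_comm _ _
      have habs_summable : Summable fun k => |c k * ⟪g k, g'⟫| :=
        (hsummable.mul_left M).of_nonneg_of_le (fun k => abs_nonneg _) hptwise
      have hbd : |⟪f, g'⟫| ≤ M * B := by
        rw [← hsum.tsum_eq]
        calc |∑' k, c k * ⟪g k, g'⟫| ≤ ∑' k, |c k * ⟪g k, g'⟫| := by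
              have h2 : Summable fun k => ‖c k * ⟪g k, g'⟫‖ := by
                simpa only [Real.norm_eq_abs] using habs_summable
              simpa only [Real.norm_eq_abs] using norm_tsum_le_tsum_norm h2
          _ ≤ ∑' k, M * |c k| :=
              Summable.tsum_le_tsum hptwise habs_summable (hsummable.mul_left M)
          _ = M * B := by rw [tsum_mul_left, hB]
      have : 0 < B / (s:ℝ) := div_pos hBpos hsRpos
      linarith
    · push_neg at hcase
      obtain ⟨k0, hk0⟩ := hcase
      have hk0ge : s ≤ k0 := by
        by_contra hlt
        exact hg' k0 (Nat.lt_of_not_le hlt) hk0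
      have hne : ∀ k, k ≠ k0 → g' ≠ g k := by
        intro k hk heq'
        exact hk ((hginj (hk0 ▸ heq' : g k0 = g k)).symm ▸ rfl)
      have hsp := split g' hg'D k0 hne
      have hinner : ⟪g k0, g'⟫ = 1 := by rw [hk0]; exact hgg k0
      rw [hinner, mul_one] at hsp
      have htri : |⟪f, g'⟫| ≤ |c k0| + M * (B - |c k0|) := by
        have := abs_sub_abs_le_abs_sub ⟪f, g'⟫ (c k0)
        linarith [abs_nonneg (c k0), this]
      -- bound |c k0| ≤ B / (s+1)
      have hk0notin : k0 ∉ Finset.range s := by simp [Nat.not_lt.2 hk0ge]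
      have hsumF : ∑ k ∈ insert k0 (Finset.range s), |c k| ≤ B :=
        hB ▸ Summable.sum_le_tsum _ (fun k _ => abs_nonneg _) hsummable
      have heach : ∀ k ∈ insert k0 (Finset.range s), |c k0| ≤ |c k| := by
        intro k hk
        rcases Finset.mem_insert.1 hk with h | h
        · rw [h]
        · exact hanti ((Finset.mem_range.1 h).le.trans hk0ge)
      have hcardsum := Finset.card_nsmul_le_sum (insert k0 (Finset.range s))
        (fun k => |c k|) (|c k0|) heach
      rw [Finset.card_insert_of_notMem hk0notin, Finset.card_range] at hcardsum
      have hineq : ((s:ℝ) + 1) * |c k0| ≤ B := by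
        have : ((s + 1 : ℕ) : ℝ) * |c k0| ≤ ∑ k ∈ insert k0 (Finset.range s), |c k| := by
          exact_mod_cast (by simpa [nsmul_eq_mul] using hcardsum)
        push_cast at this
        linarith
      have hkey : (1 - M) * |c k0| < B / (s:ℝ) := by
        rcases eq_or_lt_of_le (abs_nonneg (c k0)) with ht0 | htpos
        · rw [← ht0]
          simpa using div_pos hBpos hsRpos
        · have h2 : |c k0| < B / (s:ℝ) := by
            rw [lt_div_iff₀ hsRpos]; nlinarith
          nlinarith [mul_nonneg hM.le htpos.le]
      nlinarith [htri, hkey]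
  -- Part 3
  have hmid : B * (M + 1 / (s:ℝ)) ≤ (2 * B / s) * (1 + M) - M * B := by
    have h2Mpos : (0:ℝ) < 2 * M := by linarith
    have h2m : 2 * M * (s:ℝ) ≤ 1 + 2 * M := by
      have := mul_le_mul_of_nonneg_left hsM h2Mpos.le
      calc 2 * M * (s:ℝ) ≤ 2 * M * ((2 * M)⁻¹ + 1) := this
        _ = 1 + 2 * M := by field_simp
    have e1 : (2 * B / s) * (1 + M) - M * B - B * (M + 1 / (s:ℝ))
        = (B / s) * (1 + 2 * M - 2 * M * s) := by
      field_simp; ring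
    have e2 : 0 ≤ (B / (s:ℝ)) * (1 + 2 * M - 2 * M * s) :=
      mul_nonneg (div_pos hBpos hsRpos).le (by linarith)
    linarith
  exact ⟨part1, part2, part2.le.trans (hmid.trans part1)⟩
end

section
/- Let H, L₁, and the OSGA residual r_k^s be as in the OSGA approximation theorem with s ≤ (2M)^{-1}+1. If f belongs to the interpolation space R_p = [H, L₁]_{θ,∞} for some 0 < θ < 1, i.e., K(f,t;H,L₁) ≤ C t^θ for all t > 0, then ‖r_k^s‖ ≤ C₁ (ks)^{-θ/2} for all k ≥ 1, where C₁ depends only on C and θ. -/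
open scoped RealInnerProductSpace

set_option maxHeartbeats 4000000 in
/-- if `f` lies in the interpolation space `[H, L₁]_{θ,∞}`, i.e. its
K-functional with respect to the ℓ¹-hull of the dictionary satisfies
`K(f,t) ≤ C tᶿ` for all `t > 0`, then the OSGA residual decays like
`‖rₖˢ‖ ≤ C₁ (k s)^{-θ/2}` for a constant `C₁` depending only on `C` and `θ`. -/
theorem osga_interpolation_space_rate
    {H : Type*} [NormedAddCommGroup H] [InnerProductSpace ℝ H]
    (D : Set H) (hDnorm : ∀ g ∈ D, ‖g‖ = 1) (M : ℝ) (hM : 0 < M)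
    (hcoh : ∀ g ∈ D, ∀ g' ∈ D, g ≠ g' → |⟪g, g'⟫| ≤ M)
    (s : ℕ) (hs : 1 ≤ s) (hsM : (s : ℝ) ≤ (2 * M)⁻¹ + 1)
    (f : H) (g : ℕ → H) (hgD : ∀ i, g i ∈ D)
    (fk : ℕ → H)
    (hmem : ∀ k, fk k ∈ Submodule.span ℝ (g '' {i | i < k * s}))
    (hproj : ∀ k, ∀ v ∈ Submodule.span ℝ (g '' {i | i < k * s}), ⟪f - fk k, v⟫ = 0)
    (hgreedy : ∀ k i, k * s ≤ i → i < (k + 1) * s →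
      ∀ g' ∈ D, (∀ j, k * s ≤ j → j < (k + 1) * s → g' ≠ g j) →
        |⟪f - fk k, g'⟫| ≤ |⟪f - fk k, g i⟫|)
    (θ C : ℝ) (hθ : 0 < θ) (hθ1 : θ < 1) (hC : 0 < C)
    (hK : ∀ t : ℝ, 0 < t → ∃ (h : H) (c : ℕ → ℝ) (e : ℕ → H),
      (∀ n, e n ∈ D) ∧ HasSum (fun n => c n • e n) h ∧
      (Summable fun n => |c n|) ∧
      ‖f - h‖ + t * (∑' n, |c n|) ≤ C * t ^ θ) :
    ∃ C₁ : ℝ, 0 < C₁ ∧ ∀ k : ℕ, 1 ≤ k →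
      ‖f - fk k‖ ≤ C₁ * ((k * s : ℝ)) ^ (-(θ / 2)) := by
  have hspos : (0:ℝ) < (s:ℝ) := by exact_mod_cast hs
  refine ⟨3 * C * (s:ℝ) ^ (θ / 2), by positivity, ?_⟩
  intro k hk
  have hk0 : (0:ℝ) < (k:ℝ) := by exact_mod_cast hk
  -- abbreviation for residual norms
  set a : ℕ → ℝ := fun j => ‖f - fk j‖ with ha
  have ha_nonneg : ∀ j, 0 ≤ a j := fun j => norm_nonneg _
  -- projection minimality
  have hproj_min : ∀ j, ∀ v ∈ Submodule.span ℝ (g '' {i | i < j * s}),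
      a j ^ 2 ≤ ‖f - v‖ ^ 2 := by
    intro j v hv
    have hvs : fk j - v ∈ Submodule.span ℝ (g '' {i | i < j * s}) :=
      sub_mem (hmem j) hv
    have h0 : ⟪f - fk j, fk j - v⟫ = 0 := hproj j _ hvs
    have hfv : f - v = (f - fk j) + (fk j - v) := by abel
    rw [hfv, norm_add_sq_real, h0]
    nlinarith [sq_nonneg ‖fk j - v‖]
  -- span monotonicity
  have hspan_mono : ∀ j, (Submodule.span ℝ (g '' {i | i < j * s})) ≤
      Submodule.span ℝ (g '' {i | i < (j+1) * s}) := by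
    intro j
    apply Submodule.span_mono
    apply Set.image_mono
    intro i hi
    have : i < j * s := hi
    have : i < (j+1) * s := lt_of_lt_of_le this (Nat.mul_le_mul_right s (Nat.le_succ j))
    exact this
  -- monotone residual
  have hmono : ∀ j, a (j+1) ≤ a j := by
    intro j
    have h1 := hproj_min (j+1) (fk j) (hspan_mono j (hmem j))
    have := ha_nonneg j
    have := ha_nonneg (j+1)
    nlinarith
  -- the step inequality, multiplied form
  -- `hK` gives us, for our chosen `t`, a decomposition `f = h + (f - h)`
  set t : ℝ := (k:ℝ) ^ (-(1/2) : ℝ) with htdef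
  have ht : 0 < t := Real.rpow_pos_of_pos hk0 _
  obtain ⟨h, c, e, heD, hsum, hsummable, hbound⟩ := hK t ht
  set ε : ℝ := ‖f - h‖ with hεdef
  set L : ℝ := ∑' n, |c n| with hLdef
  have hε0 : 0 ≤ ε := norm_nonneg _
  have hL0 : 0 ≤ L := tsum_nonneg (fun n => abs_nonneg _)
  have hεt : ε ≤ C * t ^ θ := by nlinarith [mul_nonneg ht.le hL0]
  have hLt : t * L ≤ C * t ^ θ := by nlinarith
  -- key step inequality
  have hstep : ∀ j, ε ≤ a j →
      (a j ^ 2 - a j * ε) ^ 2 ≤ (a j ^ 2 - a (j+1) ^ 2) * L ^ 2 := by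
    intro j hja
    -- pick the best index in the batch
    have hne : (Finset.Ico (j * s) ((j+1) * s)).Nonempty := by
      rw [Finset.nonempty_Ico]
      have : j * s < j * s + s := by omega
      calc j * s < j * s + s := this
        _ = (j+1) * s := by ring
    obtain ⟨i0, hi0mem, hi0max⟩ :=
      Finset.exists_max_image (Finset.Ico (j * s) ((j+1) * s))
        (fun i => |⟪f - fk j, g i⟫|) hne
    obtain ⟨hi0l, hi0r⟩ := Finset.mem_Ico.mp hi0mem
    set A : ℝ := |⟪f - fk j, g i0⟫| with hAdef
    have hA0 : 0 ≤ A := abs_nonneg _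
    -- A dominates all dictionary inner products
    have hA_sup : ∀ g' ∈ D, |⟪f - fk j, g'⟫| ≤ A := by
      intro g' hg'
      by_cases hcase : ∃ jj, j * s ≤ jj ∧ jj < (j+1) * s ∧ g' = g jj
      · obtain ⟨jj, h1, h2, h3⟩ := hcase
        rw [h3]
        exact hi0max jj (Finset.mem_Ico.mpr ⟨h1, h2⟩)
      · push_neg at hcase
        exact hgreedy j i0 hi0l hi0r g' hg' (fun jj h1 h2 => hcase jj h1 h2)
    -- inner product of residual with f
    have hrf : ⟪f - fk j, f⟫ = a j ^ 2 := by
      have hsplit : f = (f - fk j) + fk j := by abel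
      calc ⟪f - fk j, f⟫ = ⟪f - fk j, (f - fk j) + fk j⟫ := by rw [← hsplit]
        _ = ⟪f - fk j, f - fk j⟫ + ⟪f - fk j, fk j⟫ := inner_add_right _ _ _
        _ = a j ^ 2 + 0 := by rw [real_inner_self_eq_norm_sq, hproj j _ (hmem j)]
        _ = a j ^ 2 := by ring
    -- lower bound for ⟪r, h⟫
    have hlow : a j ^ 2 - a j * ε ≤ ⟪f - fk j, h⟫ := by
      have h1 : ⟪f - fk j, h⟫ = ⟪f - fk j, f⟫ - ⟪f - fk j, f - h⟫ := by
        rw [inner_sub_right]; ring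
      have h2 : ⟪f - fk j, f - h⟫ ≤ a j * ε := real_inner_le_norm _ _
      rw [h1, hrf]; linarith
    -- upper bound for ⟪r, h⟫
    have hup : ⟪f - fk j, h⟫ ≤ L * A := by
      have hsum2 : HasSum (fun n => ⟪f - fk j, c n • e n⟫) ⟪f - fk j, h⟫ :=
        (innerSL ℝ (f - fk j)).hasSum hsum
      have hsum2' : HasSum (fun n => c n * ⟪f - fk j, e n⟫) ⟪f - fk j, h⟫ := by
        convert hsum2 using 2 with n
        rw [real_inner_smul_right]
      have hptwise : ∀ n, c n * ⟪f - fk j, e n⟫ ≤ |c n| * A := by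
        intro n
        calc c n * ⟪f - fk j, e n⟫ ≤ |c n * ⟪f - fk j, e n⟫| := le_abs_self _
          _ = |c n| * |⟪f - fk j, e n⟫| := abs_mul _ _
          _ ≤ |c n| * A := by
              exact mul_le_mul_of_nonneg_left (hA_sup _ (heD n)) (abs_nonneg _)
      have hsummable2 : Summable (fun n => |c n| * A) := hsummable.mul_right A
      have := Summable.tsum_le_tsum hptwise hsum2'.summable hsummable2
      rw [hsum2'.tsum_eq] at this
      calc ⟪f - fk j, h⟫ ≤ ∑' n, |c n| * A := this
        _ = L * A := by rw [tsum_mul_right]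
    -- quadratic gain: a (j+1)^2 ≤ a j ^2 - A^2
    have hgain : a (j+1) ^ 2 ≤ a j ^ 2 - A ^ 2 := by
      set lam : ℝ := ⟪f - fk j, g i0⟫ with hlamdef
      have hAlam : A ^ 2 = lam ^ 2 := by rw [hAdef, sq_abs]
      have hv : fk j + lam • g i0 ∈ Submodule.span ℝ (g '' {i | i < (j+1) * s}) := by
        refine add_mem (hspan_mono j (hmem j)) (Submodule.smul_mem _ _ ?_)
        exact Submodule.subset_span ⟨i0, hi0r, rfl⟩
      have h1 := hproj_min (j+1) _ hv
      have h2 : f - (fk j + lam • g i0) = (f - fk j) - lam • g i0 := by abel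
      have h3 : ‖(f - fk j) - lam • g i0‖ ^ 2 = ‖f - fk j‖ ^ 2 - lam ^ 2 := by
        rw [norm_sub_sq_real, real_inner_smul_right, norm_smul,
          hDnorm _ (hgD i0), Real.norm_eq_abs, mul_one, sq_abs, ← hlamdef]
        ring
      rw [h2, h3] at h1
      have haj : ‖f - fk j‖ = a j := rfl
      rw [haj] at h1
      rw [hAlam]
      linarith
    -- combine
    have hLA : a j ^ 2 - a j * ε ≤ L * A := le_trans hlow hup
    have hpos : 0 ≤ a j ^ 2 - a j * ε := by nlinarith [ha_nonneg j]
    have hsq : (a j ^ 2 - a j * ε) ^ 2 ≤ (L * A) ^ 2 := by nlinarith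
    have : (L * A) ^ 2 = A ^ 2 * L ^ 2 := by ring
    nlinarith
  have hak : a k = ‖f - fk k‖ := rfl
  clear_value a t ε L
  -- the recursion: for all j ≥ 1, either residual ≤ ε or (a j² - ε²)·j ≤ 4L²
  have key : ∀ j : ℕ, a j ≤ ε ∨ (a j ^ 2 - ε ^ 2) * (j:ℝ) ≤ 4 * L ^ 2 := by
    intro j
    induction j with
    | zero => right; push_cast; nlinarith [sq_nonneg L]
    | succ n ih =>
      by_cases hna : a n ≤ ε
      · left; exact le_trans (hmono n) hna
      · push_neg at hna
        rcases ih with ih | ih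
        · exact absurd ih (not_le.mpr hna)
        · -- main case
          have hstepn := hstep n hna.le
          set E : ℝ := a n ^ 2 - ε ^ 2 with hEdef
          set P : ℝ := a n ^ 2 - a (n+1) ^ 2 with hPdef
          have hE0 : 0 < E := by nlinarith [ha_nonneg n]
          have hP0 : 0 ≤ P := by
            have := hmono n
            have := ha_nonneg (n+1)
            nlinarith
          -- (E/2)^2 ≤ P L²  since a n (a n - ε) ≥ E/2
          have hPL : E ^ 2 ≤ 4 * (P * L ^ 2) := by
            have h1 : E / 2 ≤ a n ^ 2 - a n * ε := by nlinarith
            have h2 : 0 ≤ E / 2 := by linarith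
            nlinarith
          by_cases hend : a (n+1) ≤ ε
          · left; exact hend
          · right
            push_neg at hend
            -- a(n+1)² - ε² = E - P
            have hEP : a (n+1) ^ 2 - ε ^ 2 = E - P := by rw [hEdef, hPdef]; ring
            rw [hEP]
            push_cast
            -- goal: (E - P) * (n + 1) ≤ 4 L²
            rcases Nat.eq_zero_or_pos n with hn0 | hn1
            · -- base case n = 0 : use E - P ≤ E - E²/(4L²) ≤ L² ≤ 4L²
              subst hn0
              simp only [Nat.cast_zero, zero_add, mul_one]
              -- from 4 P L² ≥ E²: E - P ≤ E - E²/(4L²) ≤ L² ≤ 4L² if L > 0;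
              -- if L = 0 then E² ≤ 0 contradiction with E > 0
              rcases eq_or_lt_of_le hL0 with hLz | hLz
              · exfalso; rw [← hLz] at hPL; nlinarith
              · nlinarith [sq_nonneg (E - 2 * L ^ 2)]
            · -- inductive case: E n ≤ 4 L², n ≥ 1
              have hn1' : (1:ℝ) ≤ (n:ℝ) := by exact_mod_cast hn1
              have hEn : E * (n:ℝ) ≤ 4 * L ^ 2 := ih
              have hEB : E ≤ 4 * L ^ 2 := by nlinarith
              rcases eq_or_lt_of_le hL0 with hLz | hLz
              · exfalso; rw [← hLz] at hPL; nlinarith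
              · -- certificate: (4L²)·[(E-P)(n+1)] ≤ (4L²)²
                have hB : (0:ℝ) < 4 * L ^ 2 := by positivity
                have hBP : E ^ 2 ≤ P * (4 * L ^ 2) := by linarith
                have hc6 : (4 * L ^ 2) * ((E - P) * ((n:ℝ) + 1)) ≤
                    (4 * L ^ 2) * (4 * L ^ 2) := by
                  have hc1 : (4 * L ^ 2 * E - 4 * L ^ 2 * P) * ((n:ℝ) + 1) ≤
                      (4 * L ^ 2 * E - E ^ 2) * ((n:ℝ) + 1) := by
                    apply mul_le_mul_of_nonneg_right _ (by linarith)
                    linarith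
                  have hc3 : E * ((n:ℝ) + 1) ≤ 4 * L ^ 2 + E := by
                    have : E * ((n:ℝ) + 1) = E * (n:ℝ) + E := by ring
                    linarith
                  have hc4 : (4 * L ^ 2 - E) * (E * ((n:ℝ) + 1)) ≤
                      (4 * L ^ 2 - E) * (4 * L ^ 2 + E) :=
                    mul_le_mul_of_nonneg_left hc3 (by linarith)
                  have hc5 : (4 * L ^ 2 - E) * (4 * L ^ 2 + E) ≤
                      (4 * L ^ 2) * (4 * L ^ 2) := by nlinarith [sq_nonneg E]
                  calc (4 * L ^ 2) * ((E - P) * ((n:ℝ) + 1))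
                      = (4 * L ^ 2 * E - 4 * L ^ 2 * P) * ((n:ℝ) + 1) := by ring
                    _ ≤ (4 * L ^ 2 * E - E ^ 2) * ((n:ℝ) + 1) := hc1
                    _ = (4 * L ^ 2 - E) * (E * ((n:ℝ) + 1)) := by ring
                    _ ≤ (4 * L ^ 2 - E) * (4 * L ^ 2 + E) := hc4
                    _ ≤ (4 * L ^ 2) * (4 * L ^ 2) := hc5
                exact le_of_mul_le_mul_left hc6 hB
  -- from key: a k ≤ ε + 2 L t  (recall t = k^{-1/2}, t² = 1/k)
  have ht2 : t ^ 2 * (k:ℝ) = 1 := by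
    rw [htdef]
    rw [← Real.rpow_natCast ((k:ℝ) ^ (-(1/2):ℝ)) 2, ← Real.rpow_mul hk0.le]
    norm_num
    rw [Real.rpow_neg_one]
    field_simp
  have habound : a k ≤ ε + 2 * L * t := by
    rcases key k with hcase | hcase
    · have : 0 ≤ 2 * L * t := by positivity
      linarith
    · -- a k ² ≤ ε² + 4L²/k = ε² + (2Lt)²
      have h1 : (a k ^ 2 - ε ^ 2) * (k:ℝ) ≤ (2 * L * t) ^ 2 * (k:ℝ) := by
        calc (a k ^ 2 - ε ^ 2) * (k:ℝ) ≤ 4 * L ^ 2 := hcase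
          _ = 4 * L ^ 2 * (t ^ 2 * (k:ℝ)) := by rw [ht2]; ring
          _ = (2 * L * t) ^ 2 * (k:ℝ) := by ring
      have h2 : a k ^ 2 ≤ ε ^ 2 + (2 * L * t) ^ 2 :=
        by nlinarith
      have h3 : 0 ≤ 2 * L * t := by positivity
      nlinarith [ha_nonneg k, mul_nonneg hε0 h3]
  -- final computation
  have hfinal : ε + 2 * L * t ≤ 3 * C * t ^ θ := by nlinarith
  have hid : 3 * C * (s:ℝ) ^ (θ / 2) * ((k:ℝ) * (s:ℝ)) ^ (-(θ / 2)) = 3 * C * t ^ θ := by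
    have htθ : t ^ θ = (k:ℝ) ^ (-(θ / 2)) := by
      rw [htdef, ← Real.rpow_mul hk0.le]
      norm_num
      ring_nf
    have hX : ((k:ℝ) * (s:ℝ)) ^ (-(θ / 2)) = (k:ℝ) ^ (-(θ / 2)) * (s:ℝ) ^ (-(θ / 2)) :=
      Real.mul_rpow hk0.le hspos.le
    have hss : (s:ℝ) ^ (θ / 2) * (s:ℝ) ^ (-(θ / 2)) = 1 := by
      rw [← Real.rpow_add hspos]; norm_num
    rw [hX, htθ]
    linear_combination (3 * C * (k:ℝ) ^ (-(θ / 2))) * hss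
  calc ‖f - fk k‖ = a k := hak.symm
    _ ≤ ε + 2 * L * t := habound
    _ ≤ 3 * C * t ^ θ := hfinal
    _ = 3 * C * (s:ℝ) ^ (θ / 2) * ((k:ℝ) * (s:ℝ)) ^ (-(θ / 2)) := hid.symm
end

section
/- Let r ∈ H and suppose h = ∑_{j=v+1}^∞ c_j g_j where g_j are unit-norm dictionary elements with coherence at most M, the tail coefficients satisfy ∑_{j>v}|c_j| ≤ B and |c_{v+1}| ≤ 2B/s with |c_{v+1}| ≥ |c_{v+2}| ≥ ..., and suppose q_s ≥ ‖P_{G(J_l)} r‖ for every block J_l = [(l-1)s+v+1, ls+v] of s consecutive indices. Then ⟨r, h⟩ ≤ 3 q_s (1+M(s-1))^{1/2} B s^{-1/2}. -/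
/-!
Split `⟪r, h⟫ = ∑ⱼ cⱼ ⟪r, gⱼ⟫` into the blocks `J_l`. On one block, Cauchy–Schwarz bounds the
block sum by `‖c|J_l‖₂ · (∑_{j ∈ J_l} ⟪r, gⱼ⟫²)^{1/2}`, and for a unit-norm family of coherence
`M` the Gram matrix has norm at most `1 + M(s-1)`, which gives
`∑_{j ∈ J_l} ⟪r, gⱼ⟫² ≤ (1 + M(s-1)) ‖P_{G(J_l)} r‖²`.
Since `|cⱼ|` is nonincreasing, `‖c|J_{l+1}‖₂ ≤ s^{1/2} |c_{min J_{l+1}}| ≤ s^{-1/2} ‖c|J_l‖₁`, and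
`‖c|J_1‖₂ ≤ s^{1/2} |c_{v+1}| ≤ 2B s^{-1/2}`; summing, `∑_l ‖c|J_l‖₂ ≤ 3B s^{-1/2}`.
-/

open scoped RealInnerProductSpace BigOperators

theorem HasSum.sum_blocks {α : Type*} [AddCommMonoid α] [TopologicalSpace α] [ContinuousAdd α]
    [RegularSpace α] {f : ℕ → α} {a : α} (hf : HasSum f a) (s : ℕ) [NeZero s] :
    HasSum (fun l => ∑ i : Fin s, f (l * s + i)) a :=
  ((Nat.divModEquiv s).symm.hasSum_iff.mpr hf).prod_fiberwise fun _ => hasSum_fintype _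

section Coherence

variable {H ι : Type*} [NormedAddCommGroup H] [InnerProductSpace ℝ H] {M : ℝ} {G : ι → H}

theorem mul_mul_inner_le_of_coherence (hGn : ∀ i, ‖G i‖ = 1)
    (hGc : ∀ i j, i ≠ j → |⟪G i, G j⟫| ≤ M) [DecidableEq ι] (b : ι → ℝ) (i j : ι) :
    b i * b j * ⟪G i, G j⟫ ≤
      M * (|b i| * |b j|) + if i = j then (1 - M) * b i ^ 2 else 0 := by
  by_cases hij : i = j
  · subst hij
    rw [if_pos rfl, real_inner_self_eq_norm_sq, hGn, abs_mul_abs_self]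
    exact le_of_eq (by ring)
  · rw [if_neg hij, add_zero]
    calc b i * b j * ⟪G i, G j⟫ ≤ |b i| * |b j| * |⟪G i, G j⟫| := by
          rw [← abs_mul, ← abs_mul]; exact le_abs_self _
      _ ≤ |b i| * |b j| * M := by gcongr; exact hGc i j hij
      _ = M * (|b i| * |b j|) := mul_comm _ _

variable [Fintype ι]

theorem norm_sum_smul_sq_le_of_coherence (hM : 0 ≤ M) (hGn : ∀ i, ‖G i‖ = 1)
    (hGc : ∀ i j, i ≠ j → |⟪G i, G j⟫| ≤ M) (b : ι → ℝ) :
    ‖∑ i, b i • G i‖ ^ 2 ≤ (1 + M * (Fintype.card ι - 1)) * ∑ i, b i ^ 2 := by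
  classical
  have hcs : (∑ i, |b i|) ^ 2 ≤ Fintype.card ι * ∑ i, b i ^ 2 := by
    simpa only [sq_abs, Finset.card_univ] using
      sq_sum_le_card_mul_sum_sq (s := Finset.univ) (f := fun i => |b i|)
  calc ‖∑ i, b i • G i‖ ^ 2 = ∑ i, ∑ j, b i * b j * ⟪G i, G j⟫ := by
        simp only [← real_inner_self_eq_norm_sq, sum_inner, inner_sum, real_inner_smul_left,
          real_inner_smul_right]
        exact Finset.sum_congr rfl fun i _ => Finset.sum_congr rfl fun j _ => by
          rw [real_inner_comm]; ring
    _ ≤ ∑ i, ∑ j, (M * (|b i| * |b j|) + if i = j then (1 - M) * b i ^ 2 else 0) :=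
        Finset.sum_le_sum fun i _ => Finset.sum_le_sum fun j _ =>
          mul_mul_inner_le_of_coherence hGn hGc b i j
    _ = M * (∑ i, |b i|) ^ 2 + (1 - M) * ∑ i, b i ^ 2 := by
        simp only [Finset.sum_add_distrib, Finset.sum_ite_eq, Finset.mem_univ, if_true,
          ← Finset.mul_sum, sq, Finset.sum_mul_sum]
    _ ≤ (1 + M * (Fintype.card ι - 1)) * ∑ i, b i ^ 2 := by nlinarith

variable [Nonempty ι] {K : Submodule ℝ H} [K.HasOrthogonalProjection]

theorem sum_inner_sq_le_of_coherence (hM : 0 ≤ M) (hGn : ∀ i, ‖G i‖ = 1)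
    (hGc : ∀ i j, i ≠ j → |⟪G i, G j⟫| ≤ M) (hGK : ∀ i, G i ∈ K) (r : H) :
    ∑ i, ⟪r, G i⟫ ^ 2 ≤ (1 + M * (Fintype.card ι - 1)) * ‖K.starProjection r‖ ^ 2 := by
  set S := ∑ i, ⟪r, G i⟫ ^ 2
  set u := ∑ i, ⟪r, G i⟫ • G i
  have hC : 1 ≤ 1 + M * (Fintype.card ι - 1) := by
    have : (1 : ℝ) ≤ Fintype.card ι := by exact_mod_cast Fintype.card_pos
    nlinarith
  have hS : S ≤ ‖K.starProjection r‖ * ‖u‖ := calc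
    S = ⟪r, u⟫ := by simp only [S, u, inner_sum, real_inner_smul_right, sq]
    _ = ⟪K.starProjection r, u⟫ := by
        rw [← sub_eq_zero, ← inner_sub_left]
        exact K.starProjection_inner_eq_zero r u
          (K.sum_mem fun i _ => K.smul_mem _ (hGK i))
    _ ≤ ‖K.starProjection r‖ * ‖u‖ := real_inner_le_norm _ _
  have hu : ‖u‖ ^ 2 ≤ (1 + M * (Fintype.card ι - 1)) * S :=
    norm_sum_smul_sq_le_of_coherence hM hGn hGc fun i => ⟪r, G i⟫
  rcases (Finset.sum_nonneg fun i _ => sq_nonneg _ : 0 ≤ S).eq_or_lt with hS0 | hS0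
  · linarith [mul_nonneg (zero_le_one.trans hC) (sq_nonneg ‖K.starProjection r‖)]
  refine le_of_mul_le_mul_right ?_ hS0
  calc S * S ≤ (‖K.starProjection r‖ * ‖u‖) ^ 2 := by
        rw [sq]; exact mul_self_le_mul_self hS0.le hS
    _ = ‖K.starProjection r‖ ^ 2 * ‖u‖ ^ 2 := mul_pow _ _ _
    _ ≤ ‖K.starProjection r‖ ^ 2 * ((1 + M * (Fintype.card ι - 1)) * S) := by gcongr
    _ = _ := by ring

theorem sum_mul_inner_le_of_coherence (hM : 0 ≤ M) (hGn : ∀ i, ‖G i‖ = 1)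
    (hGc : ∀ i j, i ≠ j → |⟪G i, G j⟫| ≤ M) (hGK : ∀ i, G i ∈ K) (b : ι → ℝ) (r : H) :
    ∑ i, b i * ⟪r, G i⟫ ≤
      √(∑ i, b i ^ 2) * (√(1 + M * (Fintype.card ι - 1)) * ‖K.starProjection r‖) := by
  refine (Real.sum_mul_le_sqrt_mul_sqrt _ _ _).trans
    (mul_le_mul_of_nonneg_left ?_ (Real.sqrt_nonneg _))
  rw [← Real.sqrt_sq (norm_nonneg (K.starProjection r)), ← Real.sqrt_mul']
  · exact Real.sqrt_le_sqrt (sum_inner_sq_le_of_coherence hM hGn hGc hGK r)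
  · positivity

end Coherence

section BlockNorm

noncomputable def blockNorm (d : ℕ → ℝ) (s l : ℕ) : ℝ := √(∑ i : Fin s, d (l * s + i) ^ 2)

variable {d : ℕ → ℝ} (hd : Antitone d) (hd0 : ∀ j, 0 ≤ d j)
include hd hd0

theorem blockNorm_le_sqrt_mul (s l : ℕ) : blockNorm d s l ≤ √s * d (l * s) := by
  rw [← Real.sqrt_sq (hd0 (l * s)), ← Real.sqrt_mul (Nat.cast_nonneg s)]
  refine Real.sqrt_le_sqrt ?_
  calc ∑ i : Fin s, d (l * s + i) ^ 2 ≤ ∑ _i : Fin s, d (l * s) ^ 2 :=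
        Finset.sum_le_sum fun i _ => pow_le_pow_left₀ (hd0 _) (hd (Nat.le_add_right _ _)) 2
    _ = s * d (l * s) ^ 2 := by simp

theorem sqrt_mul_blockNorm_succ_le (s l : ℕ) :
    √s * blockNorm d s (l + 1) ≤ ∑ i : Fin s, d (l * s + i) := calc
  √s * blockNorm d s (l + 1) ≤ √s * (√s * d ((l + 1) * s)) := by
      gcongr; exact blockNorm_le_sqrt_mul hd hd0 s (l + 1)
  _ = ∑ _i : Fin s, d ((l + 1) * s) := by
      rw [← mul_assoc, Real.mul_self_sqrt (Nat.cast_nonneg s)]; simp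
  _ ≤ ∑ i : Fin s, d (l * s + i) :=
      Finset.sum_le_sum fun i _ => hd <| by
        rw [add_mul, one_mul]; exact Nat.add_le_add_left i.2.le _

variable (hsum : Summable d) (s : ℕ) [NeZero s]
include hsum

theorem summable_blockNorm : Summable (blockNorm d s) := by
  have hs : √s ≠ 0 := Real.sqrt_ne_zero'.mpr (Nat.cast_pos.mpr (NeZero.pos s))
  refine (summable_nat_add_iff 1).mp ((summable_mul_left_iff hs).mp ?_)
  exact (hsum.hasSum.sum_blocks s).summable.of_nonneg_of_le
    (fun l => by unfold blockNorm; positivity) (sqrt_mul_blockNorm_succ_le hd hd0 s)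

theorem sqrt_mul_tsum_blockNorm_le :
    √s * ∑' l, blockNorm d s l ≤ s * d 0 + ∑' j, d j := by
  have hD := summable_blockNorm hd hd0 hsum s
  have hhead : √s * blockNorm d s 0 ≤ s * d 0 := by
    have := mul_le_mul_of_nonneg_left (blockNorm_le_sqrt_mul hd hd0 s 0) (Real.sqrt_nonneg s)
    rwa [zero_mul, ← mul_assoc, Real.mul_self_sqrt (Nat.cast_nonneg s)] at this
  have htail : ∑' l, √s * blockNorm d s (l + 1) ≤ ∑' j, d j := by
    rw [← (hsum.hasSum.sum_blocks s).tsum_eq]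
    exact (((summable_nat_add_iff 1).mpr hD).mul_left _).tsum_le_tsum
      (sqrt_mul_blockNorm_succ_le hd hd0 s) (hsum.hasSum.sum_blocks s).summable
  rw [hD.tsum_eq_zero_add, mul_add, ← tsum_mul_left]
  linarith

theorem tsum_blockNorm_le {B : ℝ} (hfirst : d 0 ≤ 2 * B / s) (hl1 : ∑' j, d j ≤ B) :
    ∑' l, blockNorm d s l ≤ 3 * B / √s := by
  have hs : (0 : ℝ) < s := Nat.cast_pos.mpr (NeZero.pos s)
  rw [le_div_iff₀ (Real.sqrt_pos.mpr hs), mul_comm]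
  have := sqrt_mul_tsum_blockNorm_le hd hd0 hsum s
  have := (le_div_iff₀' hs).mp hfirst
  linarith

end BlockNorm

theorem block_inner_product_bound_general
    {H : Type*} [NormedAddCommGroup H] [InnerProductSpace ℝ H]
    (M : ℝ) (hM : 0 ≤ M) (s v : ℕ) (hs : 1 ≤ s)
    (g : ℕ → H) (hgnorm : ∀ j, ‖g j‖ = 1)
    (hcoh : ∀ i j, i ≠ j → |⟪g i, g j⟫| ≤ M)
    (B : ℝ) (c : ℕ → ℝ)
    (hmono : ∀ j, v + 1 ≤ j → |c (j + 1)| ≤ |c j|)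
    (hsummable : Summable fun j : ℕ => |c (v + 1 + j)|)
    (hl1 : (∑' j : ℕ, |c (v + 1 + j)|) ≤ B)
    (hfirst : |c (v + 1)| ≤ 2 * B / s)
    (h : H) (hrep : HasSum (fun j : ℕ => c (v + 1 + j) • g (v + 1 + j)) h)
    (r : H) (qs : ℝ)
    (hqs : ∀ l : ℕ,
      ‖(Submodule.orthogonalProjection
          (Submodule.span ℝ (Set.range fun i : Fin s => g (l * s + v + 1 + i))) r : H)‖
        ≤ qs) :
    ⟪r, h⟫ ≤ 3 * qs * Real.sqrt (1 + M * (s - 1)) * B / Real.sqrt s := by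
  have : NeZero s := ⟨by omega⟩
  set C : ℝ := 1 + M * (s - 1)
  set d : ℕ → ℝ := fun j => |c (v + 1 + j)|
  have hd : Antitone d := antitone_nat_of_succ_le fun j => by
    simpa only [d, ← add_assoc] using hmono (v + 1 + j) (Nat.le_add_right _ _)
  have hqs0 : 0 ≤ qs := (norm_nonneg _).trans (hqs 0)
  have hblocks : HasSum
      (fun l => ∑ i : Fin s, c (v + 1 + (l * s + i)) * ⟪r, g (l * s + v + 1 + i)⟫) ⟪r, h⟫ := by
    refine ((hrep.mapL (innerSL ℝ r)).sum_blocks s).congr_fun fun l =>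
      Finset.sum_congr rfl fun i _ => ?_
    rw [show l * s + v + 1 + i = v + 1 + (l * s + i) by omega]
    simp only [map_smul, coe_innerSL_apply, smul_eq_mul]
  have hblock : ∀ l, ∑ i : Fin s, c (v + 1 + (l * s + i)) * ⟪r, g (l * s + v + 1 + i)⟫ ≤
      √C * qs * blockNorm d s l := by
    intro l
    have key := sum_mul_inner_le_of_coherence hM (G := fun i : Fin s => g (l * s + v + 1 + i))
      (K := Submodule.span ℝ (Set.range fun i : Fin s => g (l * s + v + 1 + i)))
      (fun i => hgnorm _) (fun i j hij => hcoh _ _ fun hg => hij (Fin.ext (by omega)))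
      (fun i => Submodule.subset_span ⟨i, rfl⟩) (fun i => c (v + 1 + (l * s + i))) r
    simp only [Fintype.card_fin] at key
    have hb : √(∑ i : Fin s, c (v + 1 + (l * s + i)) ^ 2) = blockNorm d s l := by
      simp only [blockNorm, d, sq_abs]
    rw [hb] at key
    exact key.trans <| (mul_comm _ _).trans_le <| mul_le_mul_of_nonneg_right
      (mul_le_mul_of_nonneg_left (hqs l) (Real.sqrt_nonneg _)) (Real.sqrt_nonneg _)
  have hd0 : ∀ j, 0 ≤ d j := fun j => abs_nonneg _
  calc ⟪r, h⟫ ≤ ∑' l, √C * qs * blockNorm d s l :=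
        hasSum_le hblock hblocks ((summable_blockNorm hd hd0 hsummable s).mul_left _).hasSum
    _ = √C * qs * ∑' l, blockNorm d s l := tsum_mul_left
    _ ≤ √C * qs * (3 * B / √s) := by
        gcongr
        exact tsum_blockNorm_le hd hd0 hsummable s (by simpa [d] using hfirst) hl1
    _ = 3 * qs * √C * B / √s := by ring

/-- bound on `⟪r, h⟫` for `h = ∑_{j>v} c_j g_j`.  If the tail
coefficients are nonincreasing with ℓ¹-norm at most `B` and `|c_{v+1}| ≤ 2B/s`, the
atoms are unit-norm with mutual coherence at most `M`, and `q_s` dominates the norm of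
the projection of `r` onto the span of each block `J_l` of `s` consecutive atoms, then
`⟪r, h⟫ ≤ 3 q_s (1 + M(s−1))^{1/2} B s^{-1/2}`. -/
theorem block_inner_product_bound
    {H : Type*} [NormedAddCommGroup H] [InnerProductSpace ℝ H] [CompleteSpace H]
    (M : ℝ) (hM : 0 ≤ M) (s v : ℕ) (hs : 1 ≤ s)
    (g : ℕ → H) (hgnorm : ∀ j, ‖g j‖ = 1)
    (hcoh : ∀ i j, i ≠ j → |⟪g i, g j⟫| ≤ M)
    (B : ℝ) (hB : 0 < B) (c : ℕ → ℝ)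
    (hmono : ∀ j, v + 1 ≤ j → |c (j + 1)| ≤ |c j|)
    (hsummable : Summable fun j : ℕ => |c (v + 1 + j)|)
    (hl1 : (∑' j : ℕ, |c (v + 1 + j)|) ≤ B)
    (hfirst : |c (v + 1)| ≤ 2 * B / s)
    (h : H) (hrep : HasSum (fun j : ℕ => c (v + 1 + j) • g (v + 1 + j)) h)
    (r : H) (qs : ℝ)
    (hqs : ∀ l : ℕ,
      ‖(Submodule.orthogonalProjection
          (Submodule.span ℝ (Set.range fun i : Fin s => g (l * s + v + 1 + i))) r : H)‖
        ≤ qs) :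
    ⟪r, h⟫ ≤ 3 * qs * Real.sqrt (1 + M * (s - 1)) * B / Real.sqrt s :=
  block_inner_product_bound_general M hM s v hs g hgnorm hcoh B c hmono hsummable hl1 hfirst h hrep
    r qs hqs
end
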